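/- Let T be a pruned tree on a non-empty countable set A, let X be the set of infinite branches of T with its cylinder-set topology, and let f : X → ℝ be an arbitrary function. Then the game Γ'(f) is determined: either Player I or Player II has a winning strategy in Γ'(f). -/
import Mathlib


open Filter Topology

/-- The initial segment `(x₀, …, x_{n-1})` of an infinite sequence `x`. -/
def initSeg {β : Type*} (x : ℕ → β) (n : ℕ) : List β :=
  List.ofFn fun i : Fin n => x i

/-- `T` is a pruned tree on `A`: it contains the empty sequence, is closed under
prefixes, and every element has a proper extension in `T`. -/
def IsPrunedTree {A : Type*} (T : Set (List A)) : Prop :=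
  [] ∈ T ∧ (∀ s ∈ T, ∀ t : List A, t <+: s → t ∈ T) ∧ ∀ s ∈ T, ∃ a : A, s ++ [a] ∈ T

/-- The space `X` of infinite branches of the tree `T`, topologized as a subspace of
the product `ℕ → A` (with `A` discrete); this is exactly the cylinder-set topology. -/
abbrev Branches {A : Type*} (T : Set (List A)) : Type _ :=
  {x : ℕ → A // ∀ n : ℕ, initSeg x n ∈ T}

/-- The cylinder set `O(s)` of all branches with initial segment `s`. -/
def cyl {A : Type*} (T : Set (List A)) (s : List A) : Set (Branches T) :=
  {x | initSeg x.val s.length = s}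

/-- `f : X → ℝ` is a limsup function: there is `u` defined on finite sequences with
`f x = limsup_{t → ∞} u (x₀, …, x_t)` for every branch `x` (the limsup being computed
in the extended reals and required to equal the real number `f x`). -/
def IsLimsupFunction {A : Type*} {T : Set (List A)} (f : Branches T → ℝ) : Prop :=
  ∃ u : List A → ℝ, ∀ x : Branches T,
    (f x : EReal) = Filter.limsup (fun t : ℕ => (u (initSeg x.val (t + 1)) : EReal)) Filter.atTop

/-- `f` is of Baire class 1: a pointwise limit of continuous functions. -/
def BaireClassOne {X : Type*} [TopologicalSpace X] (f : X → ℝ) : Prop :=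
  ∃ g : ℕ → X → ℝ, (∀ n, Continuous (g n)) ∧
    ∀ x, Filter.Tendsto (fun n => g n x) Filter.atTop (nhds (f x))

/-- A Cantor set: a subset homeomorphic to the Cantor space `2^ℕ`. -/
def IsCantorSet {X : Type*} [TopologicalSpace X] (C : Set X) : Prop :=
  Nonempty (C ≃ₜ (ℕ → Bool))

/-- A Bernstein set: neither it nor its complement contains a nonempty perfect set. -/
def IsBernsteinSet {X : Type*} [TopologicalSpace X] (B : Set X) : Prop :=
  ∀ P : Set X, Perfect P → P.Nonempty → ¬ P ⊆ B ∧ ¬ P ⊆ Bᶜ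

/-- A co-analytic set: the complement of an analytic set. -/
def IsCoanalytic {X : Type*} [TopologicalSpace X] (s : Set X) : Prop :=
  MeasureTheory.AnalyticSet sᶜ

/-- The sequence of moves produced by Player I's strategy `σ` against the sequence `v`
of moves of Player II: Player I's `n`-th move depends on `(v₀, …, v_{n-1})`. -/
def playI {A M : Type*} (σ : List M → A) (v : ℕ → M) : ℕ → A :=
  fun n => σ (initSeg v n)

/-- Player II has a winning strategy in the game `Γ(f)`: a strategy for Player II assigns
to each position `(x₀, …, x_t)` of moves of Player I a real number `v_t` (Player II's own
previous moves being determined), and it is winning if for every run, i.e. every branch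
`x` that Player I may produce, `f x = limsup_{t → ∞} v_t`. -/
def PlayerIIWinsGamma {A : Type*} {T : Set (List A)} (f : Branches T → ℝ) : Prop :=
  ∃ τ : List A → ℝ, ∀ x : Branches T,
    (f x : EReal) = Filter.limsup (fun t : ℕ => (τ (initSeg x.val (t + 1)) : EReal)) Filter.atTop

/-- Player I has a winning strategy in the game `Γ_R(f)` where Player II's moves are
restricted to `R`: a strategy for Player I assigns to each position `(v₀, …, v_{n-1})` of
moves of Player II a point of `A`, and it is winning if against every sequence of moves
of Player II in `R` the moves of Player I are legal (all initial segments lie in `T`) and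
the resulting branch `x` satisfies `f x ≠ limsup_{t → ∞} v_t`. -/
def PlayerIWinsGammaR {A : Type*} {T : Set (List A)} (R : Set ℝ) (f : Branches T → ℝ) :
    Prop :=
  ∃ σ : List ℝ → A, ∀ v : ℕ → ℝ, (∀ t, v t ∈ R) →
    ∃ h : ∀ n : ℕ, initSeg (playI σ v) n ∈ T,
      (f ⟨playI σ v, h⟩ : EReal) ≠ Filter.limsup (fun t : ℕ => (v t : EReal)) Filter.atTop

/-- Player I has a winning strategy in the game `Γ(f)`. -/
def PlayerIWinsGamma {A : Type*} {T : Set (List A)} (f : Branches T → ℝ) : Prop :=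
  ∃ σ : List ℝ → A, ∀ v : ℕ → ℝ,
    ∃ h : ∀ n : ℕ, initSeg (playI σ v) n ∈ T,
      (f ⟨playI σ v, h⟩ : EReal) ≠ Filter.limsup (fun t : ℕ => (v t : EReal)) Filter.atTop

/-- Player II has a winning strategy in the game `Γ'(f)`, in which Player II's moves are
pairs `(v_t, w_t)` of reals and Player II wins a run iff
`f x = limsup_{t → ∞} v_t = liminf_{t → ∞} w_t`. -/
def PlayerIIWinsGamma' {A : Type*} {T : Set (List A)} (f : Branches T → ℝ) : Prop :=
  ∃ τ : List A → ℝ × ℝ, ∀ x : Branches T,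
    (f x : EReal) =
      Filter.limsup (fun t : ℕ => ((τ (initSeg x.val (t + 1))).1 : EReal)) Filter.atTop ∧
    (f x : EReal) =
      Filter.liminf (fun t : ℕ => ((τ (initSeg x.val (t + 1))).2 : EReal)) Filter.atTop

/-- Player I has a winning strategy in the game `Γ'(f)`. -/
def PlayerIWinsGamma' {A : Type*} {T : Set (List A)} (f : Branches T → ℝ) : Prop :=
  ∃ σ : List (ℝ × ℝ) → A, ∀ v : ℕ → ℝ × ℝ,
    ∃ h : ∀ n : ℕ, initSeg (playI σ v) n ∈ T,
      ¬ ((f ⟨playI σ v, h⟩ : EReal) =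
            Filter.limsup (fun t : ℕ => ((v t).1 : EReal)) Filter.atTop ∧
         (f ⟨playI σ v, h⟩ : EReal) =
            Filter.liminf (fun t : ℕ => ((v t).2 : EReal)) Filter.atTop)

namespace GammaAux

variable {A : Type*} {T : Set (List A)}

@[simp] lemma initSeg_length (x : ℕ → A) (n : ℕ) : (initSeg x n).length = n := by
  simp [initSeg]

@[simp] lemma initSeg_zero (x : ℕ → A) : initSeg x 0 = [] := rfl

lemma initSeg_succ (x : ℕ → A) (n : ℕ) :
    initSeg x (n + 1) = initSeg x n ++ [x n] := by
  rw [initSeg, List.ofFn_succ', List.concat_eq_append]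
  rfl

@[simp] lemma initSeg_getElem (x : ℕ → A) (n i : ℕ) (h : i < (initSeg x n).length) :
    (initSeg x n)[i] = x i := by
  simp [initSeg]

lemma initSeg_take (x : ℕ → A) {m n : ℕ} (h : m ≤ n) :
    (initSeg x n).take m = initSeg x m := by
  apply List.ext_getElem
  · simp [h]
  · intro i h1 h2
    simp [initSeg]

lemma initSeg_prefix (x : ℕ → A) {m n : ℕ} (h : m ≤ n) :
    initSeg x m <+: initSeg x n := by
  rw [← initSeg_take x h]; exact List.take_prefix _ _

lemma initSeg_eq_of_le {x y : ℕ → A} {m n : ℕ} (h : m ≤ n)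
    (heq : initSeg x n = initSeg y n) : initSeg x m = initSeg y m := by
  rw [← initSeg_take x h, ← initSeg_take y h, heq]

lemma initSeg_eq_iff {x y : ℕ → A} {n : ℕ} :
    initSeg x n = initSeg y n ↔ ∀ i < n, x i = y i := by
  constructor
  · intro h i hi
    have := congrArg (fun l => l.getD i (x 0)) h
    simpa [initSeg, List.getD_eq_getElem, hi] using
      (by
        have h1 : i < (initSeg x n).length := by simp [hi]
        have h2 : i < (initSeg y n).length := by simp [hi]
        calc x i = (initSeg x n)[i] := (initSeg_getElem x n i h1).symm
        _ = (initSeg y n)[i] := by congr 1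
        _ = y i := initSeg_getElem y n i h2)
  · intro h
    apply List.ext_getElem (by simp)
    intro i h1 h2
    simp only [initSeg_getElem]
    exact h i (by simpa using h1)

/-- The diagonal limit of a chain of lists. -/
def chainLimit (s : ℕ → List A) (d : A) : ℕ → A := fun i => (s (i + 1)).getD i d

lemma chain_mono {s : ℕ → List A} (hchain : ∀ k, s k <+: s (k + 1)) :
    ∀ {k m : ℕ}, k ≤ m → s k <+: s m := by
  intro k m h
  induction m with
  | zero => simpa [Nat.le_zero.mp h] using List.prefix_refl _
  | succ m ih =>
    rcases Nat.lt_or_ge k (m+1) with h' | h'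
    · exact (ih (Nat.lt_succ_iff.mp h')).trans (hchain m)
    · have : k = m + 1 := le_antisymm h h'
      simpa [this] using List.prefix_refl _

lemma chainLimit_initSeg {s : ℕ → List A} (d : A)
    (hchain : ∀ k, s k <+: s (k + 1)) (hlen : ∀ k, k ≤ (s k).length) :
    ∀ n, initSeg (chainLimit s d) n = (s n).take n := by
  intro n
  apply List.ext_getElem
  · simp only [initSeg_length, List.length_take]
    exact (Nat.min_eq_left (hlen n)).symm
  · intro i h1 h2
    have hi : i < n := by simpa using h1
    have hilen : i < (s (i+1)).length := lt_of_lt_of_le (Nat.lt_succ_self i) (hlen (i+1))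
    rw [List.getElem_take]
    simp only [initSeg_getElem, chainLimit]
    rw [List.getD_eq_getElem _ _ hilen]
    rcases Nat.lt_or_ge i n.pred with h | h
    · exact (chain_mono hchain (by omega : i + 1 ≤ n)).getElem hilen
    · have : i + 1 = n ∨ i + 1 ≤ n := by omega
      rcases this with h' | h'
      · subst h'; rfl
      · exact (chain_mono hchain h').getElem hilen


section Branch

variable [Nonempty A]

/-- Existence of a branch through any node of a pruned tree. -/
lemma exists_branch (hT : IsPrunedTree T) {s : List A} (hs : s ∈ T) :
    ∃ x : Branches T, initSeg x.1 s.length = s := by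
  classical
  let ext : {l : List A // l ∈ T} → {l : List A // l ∈ T} :=
    fun p => ⟨p.1 ++ [(hT.2.2 p.1 p.2).choose], (hT.2.2 p.1 p.2).choose_spec⟩
  let g : ℕ → {l : List A // l ∈ T} := fun k => ext^[k] ⟨s, hs⟩
  have hg0 : g 0 = ⟨s, hs⟩ := rfl
  have hgsucc : ∀ k, g (k + 1) = ext (g k) := fun k => Function.iterate_succ_apply' ext k _
  have hchain : ∀ k, (g k).1 <+: (g (k + 1)).1 := by
    intro k; rw [hgsucc k]; exact ⟨_, rfl⟩
  have hlen : ∀ k, (g k).1.length = s.length + k := by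
    intro k; induction k with
    | zero => rfl
    | succ k ih => rw [hgsucc k]; simp [ext, ih]; omega
  have hlen' : ∀ k, k ≤ (g k).1.length := fun k => by rw [hlen]; omega
  have hmono : ∀ {k m : ℕ}, k ≤ m → (g k).1 <+: (g m).1 := fun h => chain_mono hchain h
  let d : A := Classical.arbitrary A
  have hspec := chainLimit_initSeg d hchain hlen'
  have hmem : ∀ n, initSeg (chainLimit (fun k => (g k).1) d) n ∈ T := by
    intro n
    rw [hspec n]
    exact hT.2.1 _ (g n).2 _ (List.take_prefix _ _)
  refine ⟨⟨chainLimit (fun k => (g k).1) d, hmem⟩, ?_⟩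
  rw [hspec s.length]
  have : s <+: (g s.length).1 := by
    have := hmono (Nat.zero_le s.length); rwa [hg0] at this
  rw [List.prefix_iff_eq_take] at this
  exact this.symm

lemma branches_nonempty (hT : IsPrunedTree T) : Nonempty (Branches T) := by
  obtain ⟨x, -⟩ := exists_branch hT hT.1
  exact ⟨x⟩

end Branch

section PlayerOne

/-- The dichotomy condition: a set of branches on which values `≤ c` and values `≥ c'`
are both "dense along the tree". -/
def BadPair (f : Branches T → ℝ) : Prop :=
  ∃ F : Set (Branches T), F.Nonempty ∧ ∃ c c' : ℝ, c < c' ∧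
    (∀ x ∈ F, ∀ n : ℕ, ∃ y ∈ F, initSeg y.1 n = initSeg x.1 n ∧ f y ≤ c) ∧
    (∀ x ∈ F, ∀ n : ℕ, ∃ y ∈ F, initSeg y.1 n = initSeg x.1 n ∧ c' ≤ f y)

/-- Player I's state machine. -/
noncomputable def stepFn (lo hi : Branches T → ℕ → Branches T) (θ₁ θ₂ : ℝ) :
    Branches T × Bool × ℕ → ℝ × ℝ → Branches T × Bool × ℕ := fun st m =>
  if st.2.1 then
    (if θ₁ ≤ m.1 then (lo st.1 (st.2.2 + 1), false, st.2.2 + 1)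
     else (st.1, true, st.2.2 + 1))
  else
    (if m.2 ≤ θ₂ then (hi st.1 (st.2.2 + 1), true, st.2.2 + 1)
     else (st.1, false, st.2.2 + 1))

theorem playerI_of_badPair (f : Branches T → ℝ) (hb : BadPair f) :
    PlayerIWinsGamma' f := by
  classical
  obtain ⟨F, hFne, c, c', hcc, hlow, hhigh⟩ := hb
  set θ₁ : ℝ := (c + 2 * c') / 3 with hθ₁def
  set θ₂ : ℝ := (2 * c + c') / 3 with hθ₂def
  have hθ₂θ₁ : θ₂ < θ₁ := by rw [hθ₁def, hθ₂def]; linarith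
  have hθ₁c' : θ₁ < c' := by rw [hθ₁def]; linarith
  have hcθ₂ : c < θ₂ := by rw [hθ₂def]; linarith
  have hloex : ∀ p : Branches T, ∀ n : ℕ, ∃ y : Branches T,
      p ∈ F → (y ∈ F ∧ initSeg y.1 n = initSeg p.1 n ∧ f y ≤ c) := by
    intro p n
    by_cases hp : p ∈ F
    · obtain ⟨y, hy1, hy2⟩ := hlow p hp n
      exact ⟨y, fun _ => ⟨hy1, hy2⟩⟩
    · exact ⟨p, fun h => absurd h hp⟩
  have hhiex : ∀ p : Branches T, ∀ n : ℕ, ∃ y : Branches T,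
      p ∈ F → (y ∈ F ∧ initSeg y.1 n = initSeg p.1 n ∧ c' ≤ f y) := by
    intro p n
    by_cases hp : p ∈ F
    · obtain ⟨y, hy1, hy2⟩ := hhigh p hp n
      exact ⟨y, fun _ => ⟨hy1, hy2⟩⟩
    · exact ⟨p, fun h => absurd h hp⟩
  choose lo hlo using hloex
  choose hi hhi using hhiex
  obtain ⟨xh, hxh⟩ := hFne
  set step := stepFn lo hi θ₁ θ₂ with hstepdef
  set state : List (ℝ × ℝ) → Branches T × Bool × ℕ :=
    fun l => l.foldl step (hi xh 0, true, 0) with hstatedef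
  refine ⟨fun l => ((state l).1).1 l.length, ?_⟩
  intro v
  set st : ℕ → Branches T × Bool × ℕ := fun n => state (initSeg v n) with hstdef
  have hst0 : st 0 = (hi xh 0, true, 0) := rfl
  have hstsucc : ∀ n, st (n + 1) = step (st n) (v n) := by
    intro n
    simp only [hstdef, hstatedef, initSeg_succ, List.foldl_append, List.foldl_cons,
      List.foldl_nil]
  have hcnt : ∀ n, (st n).2.2 = n := by
    intro n; induction n with
    | zero => rfl
    | succ n ih =>
      rw [hstsucc n, hstepdef, stepFn]
      split_ifs <;> simp [ih]
  have hinv : ∀ n, (st n).1 ∈ F ∧ ((st n).2.1 = true → c' ≤ f (st n).1) ∧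
      ((st n).2.1 = false → f (st n).1 ≤ c) := by
    intro n; induction n with
    | zero =>
      rw [hst0]
      exact ⟨(hhi xh 0 hxh).1, fun _ => (hhi xh 0 hxh).2.2, fun h => by simp at h⟩
    | succ n ih =>
      rw [hstsucc n, hstepdef, stepFn]
      split_ifs with h1 h2 h3
      · exact ⟨(hlo _ _ ih.1).1, fun h => by simp at h, fun _ => (hlo _ _ ih.1).2.2⟩
      · exact ⟨ih.1, fun _ => ih.2.1 h1, fun h => by simp at h⟩
      · exact ⟨(hhi _ _ ih.1).1, fun _ => (hhi _ _ ih.1).2.2, fun h => by simp at h⟩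
      · exact ⟨ih.1, fun h => by simp at h, fun _ => ih.2.2 (by simpa using h1)⟩
  have hcoh : ∀ n, initSeg ((st (n + 1)).1).1 (n + 1) = initSeg ((st n).1).1 (n + 1) := by
    intro n
    rw [hstsucc n, hstepdef, stepFn]
    split_ifs
    · rw [hcnt n]; exact (hlo _ _ (hinv n).1).2.1
    · rfl
    · rw [hcnt n]; exact (hhi _ _ (hinv n).1).2.1
    · rfl
  have hxval : ∀ n, playI (fun l => ((state l).1).1 l.length) v n = ((st n).1).1 n := by
    intro n
    show ((state (initSeg v n)).1).1 (initSeg v n).length = _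
    rw [initSeg_length]
  have hL2 : ∀ n, initSeg (playI (fun l => ((state l).1).1 l.length) v) n
      = initSeg ((st n).1).1 n := by
    intro n; induction n with
    | zero => rfl
    | succ n ih =>
      rw [initSeg_succ, ih, hxval n, ← initSeg_succ, hcoh n]
  have hleg : ∀ n, initSeg (playI (fun l => ((state l).1).1 l.length) v) n ∈ T := by
    intro n; rw [hL2 n]; exact ((st n).1).2 n
  refine ⟨hleg, ?_⟩
  rintro ⟨h1, h2⟩
  by_cases hfin : ({n | (st n).2.1 = true ∧ θ₁ ≤ (v n).1} ∪
      {n | (st n).2.1 = false ∧ (v n).2 ≤ θ₂}).Finite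
  · -- finitely many switches
    obtain ⟨N, hN⟩ : ∃ N : ℕ, ∀ n ≥ N, ¬((st n).2.1 = true ∧ θ₁ ≤ (v n).1) ∧
        ¬((st n).2.1 = false ∧ (v n).2 ≤ θ₂) := by
      rcases hfin.bddAbove with ⟨N, hb⟩
      refine ⟨N + 1, fun n hn => ⟨fun h => ?_, fun h => ?_⟩⟩
      · have := hb (Set.mem_union_left _ h); omega
      · have := hb (Set.mem_union_right _ h); omega
    have hconst : ∀ n, N ≤ n → (st n).1 = (st N).1 ∧ (st n).2.1 = (st N).2.1 := by
      intro n hn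
      induction n, hn using Nat.le_induction with
      | base => exact ⟨rfl, rfl⟩
      | succ n hn ih =>
        rcases Bool.eq_false_or_eq_true ((st n).2.1) with hm1 | hm1
        · have hv : ¬(θ₁ ≤ (v n).1) := fun h => (hN n hn).1 ⟨hm1, h⟩
          rw [hstsucc n, hstepdef, stepFn, hm1]
          rw [if_pos rfl, if_neg hv]
          exact ⟨ih.1, by rw [← hm1]; exact ih.2⟩
        · have hv : ¬((v n).2 ≤ θ₂) := fun h => (hN n hn).2 ⟨hm1, h⟩
          rw [hstsucc n, hstepdef, stepFn, hm1]
          rw [if_neg (by simp : ¬(false = true)), if_neg hv]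
          exact ⟨ih.1, by rw [← hm1]; exact ih.2⟩
    have hxeq : ∀ k, playI (fun l => ((state l).1).1 l.length) v k = ((st N).1).1 k := by
      intro k
      have hm := hL2 (max N (k + 1))
      rw [(hconst _ (le_max_left _ _)).1] at hm
      exact initSeg_eq_iff.mp hm k (by omega)
    have hxsub : (⟨playI (fun l => ((state l).1).1 l.length) v, hleg⟩ : Branches T)
        = (st N).1 := Subtype.ext (funext hxeq)
    rcases Bool.eq_false_or_eq_true ((st N).2.1) with hmode | hmode
    swap
    · -- mode false forever : liminf ≥ θ₂ but f x ≤ c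
      have hev : ∀ n ≥ N, θ₂ < (v n).2 := by
        intro n hn
        by_contra hle; push_neg at hle
        exact (hN n hn).2 ⟨(hconst n hn).2.trans hmode, hle⟩
      have hlim : (θ₂ : EReal) ≤ liminf (fun t : ℕ => ((v t).2 : EReal)) atTop :=
        Filter.le_liminf_of_le (by isBoundedDefault)
          (eventually_atTop.2 ⟨N, fun n hn => by exact_mod_cast (hev n hn).le⟩)
      rw [← h2, hxsub] at hlim
      have hfc : f ((st N).1) ≤ c := (hinv N).2.2 hmode
      rw [EReal.coe_le_coe_iff] at hlim
      linarith
    · -- mode true forever : limsup ≤ θ₁ but f x ≥ c'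
      have hev : ∀ n ≥ N, (v n).1 < θ₁ := by
        intro n hn
        by_contra hle; push_neg at hle
        exact (hN n hn).1 ⟨(hconst n hn).2.trans hmode, hle⟩
      have hlim : limsup (fun t : ℕ => ((v t).1 : EReal)) atTop ≤ (θ₁ : EReal) :=
        Filter.limsup_le_of_le (by isBoundedDefault)
          (eventually_atTop.2 ⟨N, fun n hn => by exact_mod_cast (hev n hn).le⟩)
      rw [← h1, hxsub] at hlim
      have hfc : c' ≤ f ((st N).1) := (hinv N).2.1 hmode
      rw [EReal.coe_le_coe_iff] at hlim
      linarith
  · -- infinitely many switches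
    have keyF : ∀ N : ℕ, (∀ n ≥ N, ¬((st n).2.1 = false ∧ (v n).2 ≤ θ₂)) →
        ∀ n, N ≤ n → (st n).2.1 = false → ∀ m, n ≤ m → (st m).2.1 = false := by
      intro N hN n hn hmode m hm
      induction m, hm using Nat.le_induction with
      | base => exact hmode
      | succ m hm ih =>
        rw [hstsucc m, hstepdef, stepFn, ih]
        by_cases hh3 : (v m).2 ≤ θ₂
        · exact absurd ⟨ih, hh3⟩ (hN m (le_trans hn hm))
        · simp [hh3]
    have keyT : ∀ N : ℕ, (∀ n ≥ N, ¬((st n).2.1 = true ∧ θ₁ ≤ (v n).1)) →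
        ∀ n, N ≤ n → (st n).2.1 = true → ∀ m, n ≤ m → (st m).2.1 = true := by
      intro N hN n hn hmode m hm
      induction m, hm using Nat.le_induction with
      | base => exact hmode
      | succ m hm ih =>
        rw [hstsucc m, hstepdef, stepFn, ih]
        by_cases hh2 : θ₁ ≤ (v m).1
        · exact absurd ⟨ih, hh2⟩ (hN m (le_trans hn hm))
        · simp [hh2]
    have hA : {n | (st n).2.1 = false ∧ (v n).2 ≤ θ₂}.Finite →
        {n | (st n).2.1 = true ∧ θ₁ ≤ (v n).1}.Finite := by
      intro hLo
      obtain ⟨N, hb⟩ := hLo.bddAbove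
      have hN : ∀ n ≥ N + 1, ¬((st n).2.1 = false ∧ (v n).2 ≤ θ₂) := by
        intro n hn h; have := hb h; omega
      by_cases hex : ∃ n1, N + 1 ≤ n1 ∧ (st n1).2.1 = true ∧ θ₁ ≤ (v n1).1
      · obtain ⟨n1, hn1N, hmode1, hv1⟩ := hex
        apply Set.Finite.subset (Set.finite_Iio (n1 + 1))
        intro m hm
        by_contra hge
        simp only [Set.mem_Iio, not_lt] at hge
        have hbase : (st (n1 + 1)).2.1 = false := by
          rw [hstsucc n1, hstepdef, stepFn, hmode1]
          simp [hv1]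
        have := keyF (N + 1) hN (n1 + 1) (by omega) hbase m (by omega)
        rw [hm.1] at this
        simp at this
      · push_neg at hex
        apply Set.Finite.subset (Set.finite_Iio (N + 1))
        intro m hm
        by_contra hge
        simp only [Set.mem_Iio, not_lt] at hge
        exact absurd hm.2 (not_le.mpr (hex m hge hm.1))
    have hB : {n | (st n).2.1 = true ∧ θ₁ ≤ (v n).1}.Finite →
        {n | (st n).2.1 = false ∧ (v n).2 ≤ θ₂}.Finite := by
      intro hHi
      obtain ⟨N, hb⟩ := hHi.bddAbove
      have hN : ∀ n ≥ N + 1, ¬((st n).2.1 = true ∧ θ₁ ≤ (v n).1) := by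
        intro n hn h; have := hb h; omega
      by_cases hex : ∃ n1, N + 1 ≤ n1 ∧ (st n1).2.1 = false ∧ (v n1).2 ≤ θ₂
      · obtain ⟨n1, hn1N, hmode1, hv1⟩ := hex
        apply Set.Finite.subset (Set.finite_Iio (n1 + 1))
        intro m hm
        by_contra hge
        simp only [Set.mem_Iio, not_lt] at hge
        have hbase : (st (n1 + 1)).2.1 = true := by
          rw [hstsucc n1, hstepdef, stepFn, hmode1]
          simp [hv1]
        have := keyT (N + 1) hN (n1 + 1) (by omega) hbase m (by omega)
        rw [hm.1] at this
        simp at this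
      · push_neg at hex
        apply Set.Finite.subset (Set.finite_Iio (N + 1))
        intro m hm
        by_contra hge
        simp only [Set.mem_Iio, not_lt] at hge
        exact absurd hm.2 (not_le.mpr (hex m hge hm.1))
    have hHiInf : {n | (st n).2.1 = true ∧ θ₁ ≤ (v n).1}.Infinite := by
      by_contra h; rw [Set.not_infinite] at h
      exact hfin (h.union (hB h))
    have hLoInf : {n | (st n).2.1 = false ∧ (v n).2 ≤ θ₂}.Infinite := by
      by_contra h; rw [Set.not_infinite] at h
      exact hfin ((hA h).union h)
    have hfr1 : ∃ᶠ n in (atTop : Filter ℕ), (θ₁ : EReal) ≤ ((v n).1 : EReal) := by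
      rw [frequently_atTop]
      intro a
      obtain ⟨b, hb, hab⟩ := hHiInf.exists_gt a
      exact ⟨b, hab.le, by exact_mod_cast hb.2⟩
    have hfr2 : ∃ᶠ n in (atTop : Filter ℕ), ((v n).2 : EReal) ≤ (θ₂ : EReal) := by
      rw [frequently_atTop]
      intro a
      obtain ⟨b, hb, hab⟩ := hLoInf.exists_gt a
      exact ⟨b, hab.le, by exact_mod_cast hb.2⟩
    have hls := Filter.le_limsup_of_frequently_le hfr1
    have hli := Filter.liminf_le_of_frequently_le hfr2
    rw [← h1] at hls
    rw [← h2] at hli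
    have : (θ₁ : EReal) ≤ (θ₂ : EReal) := le_trans hls hli
    rw [EReal.coe_le_coe_iff] at this
    linarith

end PlayerOne

section PlayerTwo

theorem playerII_of_U (f : Branches T → ℝ) (U : List A → ℝ)
    (hU : ∀ x : Branches T, Tendsto (fun t : ℕ => U (initSeg x.1 t)) atTop (𝓝 (f x))) :
    PlayerIIWinsGamma' f := by
  refine ⟨fun s => (U s, U s), fun x => ?_⟩
  have h : Tendsto (fun t : ℕ => (U (initSeg x.1 (t + 1)) : EReal)) atTop
      (𝓝 ((f x : EReal))) := by
    have h1 : Tendsto (fun t : ℕ => U (initSeg x.1 (t + 1))) atTop (𝓝 (f x)) :=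
      (hU x).comp (tendsto_add_atTop_nat 1)
    exact (continuous_coe_real_ereal.tendsto _).comp h1
  exact ⟨h.limsup_eq.symm, h.liminf_eq.symm⟩

end PlayerTwo

section Decomposition

variable [Countable A] [Nonempty A]

theorem decomposition (f : Branches T → ℝ) (hnb : ¬ BadPair f) {ε : ℝ} (hε : 0 < ε) :
    ∃ K : ℕ → Set (Branches T),
      (∀ i, ∀ x : Branches T, x ∉ K i → ∃ m : ℕ, ∀ y ∈ K i, initSeg y.1 m ≠ initSeg x.1 m) ∧
      (∀ i, ∀ y ∈ K i, ∀ z ∈ K i, |f y - f z| ≤ ε) ∧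
      (∀ x : Branches T, ∃ i, x ∈ K i) := by
  classical
  set Good : List A → Prop := fun s =>
    ∃ K : ℕ → Set (Branches T),
      (∀ i, ∀ x : Branches T, x ∉ K i → ∃ m : ℕ, ∀ y ∈ K i, initSeg y.1 m ≠ initSeg x.1 m) ∧
      (∀ i, ∀ y ∈ K i, ∀ z ∈ K i, |f y - f z| ≤ ε) ∧
      (∀ x : Branches T, initSeg x.1 s.length = s → ∃ i, x ∈ K i) with hGood
  set F : Set (Branches T) := {x | ∀ s, Good s → initSeg x.1 s.length ≠ s} with hF
  choose KK hKK1 hKK2 hKK3 using fun p : {l : List A // Good l} => p.2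
  obtain ⟨e, he⟩ := Countable.exists_injective_nat ({l : List A // Good l} × ℕ)
  set glob : ℕ → Set (Branches T) := fun n =>
    ⋃ (p : {l : List A // Good l} × ℕ) (_ : e p = n), KK p.1 p.2 with hglob
  have hglob_cases : ∀ n, (∃ p, e p = n ∧ glob n = KK p.1 p.2) ∨ glob n = ∅ := by
    intro n
    by_cases h : ∃ p, e p = n
    · obtain ⟨p, hp⟩ := h
      left
      refine ⟨p, hp, Set.eq_of_subset_of_subset ?_ ?_⟩
      · intro x hx
        simp only [hglob, Set.mem_iUnion] at hx
        obtain ⟨q, hq, hxq⟩ := hx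
        cases he (hq.trans hp.symm)
        exact hxq
      · intro x hx
        simp only [hglob, Set.mem_iUnion]
        exact ⟨p, hp, hx⟩
    · right
      push_neg at h
      simp only [hglob]
      apply Set.eq_empty_iff_forall_notMem.mpr
      intro x hx
      simp only [Set.mem_iUnion] at hx
      obtain ⟨q, hq, -⟩ := hx
      exact h q hq
  have hglob_tc : ∀ n, ∀ x : Branches T, x ∉ glob n →
      ∃ m : ℕ, ∀ y ∈ glob n, initSeg y.1 m ≠ initSeg x.1 m := by
    intro n x hx
    rcases hglob_cases n with ⟨p, -, hp⟩ | hp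
    · rw [hp] at hx ⊢
      exact hKK1 p.1 p.2 x hx
    · rw [hp]
      exact ⟨0, fun y hy => absurd hy (Set.notMem_empty y)⟩
  have hglob_small : ∀ n, ∀ y ∈ glob n, ∀ z ∈ glob n, |f y - f z| ≤ ε := by
    intro n
    rcases hglob_cases n with ⟨p, -, hp⟩ | hp
    · rw [hp]; exact hKK2 p.1 p.2
    · rw [hp]; exact fun y hy => absurd hy (Set.notMem_empty y)
  have hglob_cover : ∀ x : Branches T, x ∉ F → ∃ n, x ∈ glob n := by
    intro x hx
    simp only [hF, Set.mem_setOf_eq, not_forall] at hx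
    obtain ⟨s, hs, hxs⟩ := hx
    rw [not_not] at hxs
    obtain ⟨i, hi⟩ := hKK3 ⟨s, hs⟩ x hxs
    refine ⟨e (⟨s, hs⟩, i), ?_⟩
    simp only [hglob, Set.mem_iUnion]
    exact ⟨(⟨s, hs⟩, i), rfl, hi⟩
  have hgood_of_small : ∀ s : List A,
      (∀ y z : Branches T, (initSeg y.1 s.length = s ∧ y ∈ F) →
        (initSeg z.1 s.length = s ∧ z ∈ F) → |f y - f z| ≤ ε) → Good s := by
    intro s hsmall
    refine ⟨fun n => match n with
      | 0 => {y : Branches T | initSeg y.1 s.length = s ∧ y ∈ F}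
      | (k+1) => glob k, ?_, ?_, ?_⟩
    · intro i
      match i with
      | 0 =>
        intro x hx
        by_cases hxs : initSeg x.1 s.length = s
        · have hxF : x ∉ F := fun h => hx ⟨hxs, h⟩
          simp only [hF, Set.mem_setOf_eq, not_forall] at hxF
          obtain ⟨t, ht, hxt⟩ := hxF
          rw [not_not] at hxt
          exact ⟨t.length, fun y hy heq => hy.2 t ht (heq.trans hxt)⟩
        · exact ⟨s.length, fun y hy heq => hxs (heq.symm.trans hy.1)⟩
      | (k+1) => exact hglob_tc k
    · intro i
      match i with
      | 0 => exact fun y hy z hz => hsmall y z hy hz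
      | (k+1) => exact hglob_small k
    · intro x hxs
      by_cases hxF : x ∈ F
      · exact ⟨0, hxs, hxF⟩
      · obtain ⟨n, hn⟩ := hglob_cover x hxF
        exact ⟨n + 1, hn⟩
  by_cases hFe : F.Nonempty
  · exfalso
    have hspread : ∀ s : List A, (∃ x : Branches T, initSeg x.1 s.length = s ∧ x ∈ F) →
        ∃ y z : Branches T, (initSeg y.1 s.length = s ∧ y ∈ F) ∧
          (initSeg z.1 s.length = s ∧ z ∈ F) ∧ ε < |f y - f z| := by
      intro s hne
      by_contra hcon
      push_neg at hcon
      have hg : Good s := hgood_of_small s (fun y z h1 h2 => hcon y z h1 h2)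
      obtain ⟨x0, hx01, hx02⟩ := hne
      exact hx02 s hg hx01
    set E : ℚ × ℚ → Set (Branches T) := fun q =>
      {w : Branches T | w ∈ F ∧ ∀ n : ℕ,
        (∃ y : Branches T, y ∈ F ∧ initSeg y.1 n = initSeg w.1 n ∧ f y ≤ (q.1 : ℝ)) ∧
        (∃ y : Branches T, y ∈ F ∧ initSeg y.1 n = initSeg w.1 n ∧ ((q.2 : ℝ) ≤ f y))} with hE
    have hcover : ∀ x : Branches T, x ∈ F →
        ∃ q : ℚ × ℚ, ((q.1 : ℝ) < (q.2 : ℝ)) ∧ x ∈ E q := by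
      intro x hxF
      by_cases hL : ∀ n : ℕ, ∃ y : Branches T,
          y ∈ F ∧ initSeg y.1 n = initSeg x.1 n ∧ f y ≤ f x - ε / 2
      · obtain ⟨q1, hq11, hq12⟩ := exists_rat_btwn (show f x - ε / 2 < f x by linarith)
        obtain ⟨q2, hq21, hq22⟩ := exists_rat_btwn hq12
        refine ⟨(q1, q2), by exact_mod_cast hq21, hxF, fun n => ⟨?_, ⟨x, hxF, rfl, hq22.le⟩⟩⟩
        obtain ⟨y, hy1, hy2, hy3⟩ := hL n
        exact ⟨y, hy1, hy2, by linarith⟩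
      · push_neg at hL
        obtain ⟨n₀, hn₀⟩ := hL
        have hhiw : ∀ n : ℕ, ∃ z : Branches T,
            z ∈ F ∧ initSeg z.1 n = initSeg x.1 n ∧ f x + ε / 2 < f z := by
          intro n
          obtain ⟨y, z, ⟨hy1, hy2⟩, ⟨hz1, hz2⟩, hspr⟩ :=
            hspread (initSeg x.1 (max n n₀)) ⟨x, by rw [initSeg_length], hxF⟩
          rw [initSeg_length] at hy1 hz1
          have hy' := hn₀ y hy2 (initSeg_eq_of_le (le_max_right n n₀) hy1)
          have hz' := hn₀ z hz2 (initSeg_eq_of_le (le_max_right n n₀) hz1)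
          rcases abs_cases (f y - f z) with ⟨habs, -⟩ | ⟨habs, -⟩
          · exact ⟨y, hy2, initSeg_eq_of_le (le_max_left n n₀) hy1, by linarith⟩
          · exact ⟨z, hz2, initSeg_eq_of_le (le_max_left n n₀) hz1, by linarith⟩
        obtain ⟨q1, hq11, hq12⟩ := exists_rat_btwn (show f x < f x + ε / 4 by linarith)
        obtain ⟨q2, hq21, hq22⟩ := exists_rat_btwn (show (q1 : ℝ) < f x + ε / 2 by linarith)
        refine ⟨(q1, q2), by exact_mod_cast hq21, hxF, fun n => ⟨⟨x, hxF, rfl, hq11.le⟩, ?_⟩⟩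
        obtain ⟨z, hz1, hz2, hz3⟩ := hhiw n
        exact ⟨z, hz1, hz2, by linarith⟩
    have hstep : ∀ (q : ℚ × ℚ) (s : List A),
        (∃ x : Branches T, initSeg x.1 s.length = s ∧ x ∈ F) → ∀ k : ℕ,
        ∃ s' : List A, s <+: s' ∧ k ≤ s'.length ∧
          (∃ x : Branches T, initSeg x.1 s'.length = s' ∧ x ∈ F) ∧
          (((q.1 : ℝ) < (q.2 : ℝ)) → ∀ u : Branches T,
            initSeg u.1 s'.length = s' → u ∈ F → u ∉ E q) := by
      intro q s hne k
      by_cases hq : (q.1 : ℝ) < (q.2 : ℝ)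
      · set G : Set (Branches T) := {w : Branches T | initSeg w.1 s.length = s ∧ w ∈ F}
          with hG
        obtain ⟨x0, hx01, hx02⟩ := hne
        have hnd : ¬ ((∀ w ∈ G, ∀ n : ℕ, ∃ y ∈ G,
              initSeg y.1 n = initSeg w.1 n ∧ f y ≤ (q.1 : ℝ)) ∧
            (∀ w ∈ G, ∀ n : ℕ, ∃ y ∈ G,
              initSeg y.1 n = initSeg w.1 n ∧ (q.2 : ℝ) ≤ f y)) := by
          rintro ⟨hd1, hd2⟩
          exact hnb ⟨G, ⟨x0, hx01, hx02⟩, q.1, q.2, hq, hd1, hd2⟩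
        rw [not_and_or] at hnd
        rcases hnd with hnd | hnd
        · push_neg at hnd
          obtain ⟨w0, hw0G, n, hfail⟩ := hnd
          set n' := max (max n s.length) k with hn'
          refine ⟨initSeg w0.1 n', ?_, ?_, ⟨w0, by rw [initSeg_length], hw0G.2⟩,
            fun _ u hu1 hu2 hErr => ?_⟩
          · have hpre := initSeg_prefix w0.1 (show s.length ≤ n' by omega)
            rwa [hw0G.1] at hpre
          · rw [initSeg_length]; omega
          · rw [initSeg_length] at hu1
            obtain ⟨-, hprop⟩ := hErr
            obtain ⟨y, hyF, hyu, hyle⟩ := (hprop n').1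
            have hyw0 : initSeg y.1 n' = initSeg w0.1 n' := hyu.trans hu1
            have hyG : y ∈ G := by
              refine ⟨?_, hyF⟩
              rw [initSeg_eq_of_le (show s.length ≤ n' by omega) hyw0, hw0G.1]
            have := hfail y hyG (initSeg_eq_of_le (show n ≤ n' by omega) hyw0)
            linarith
        · push_neg at hnd
          obtain ⟨w0, hw0G, n, hfail⟩ := hnd
          set n' := max (max n s.length) k with hn'
          refine ⟨initSeg w0.1 n', ?_, ?_, ⟨w0, by rw [initSeg_length], hw0G.2⟩,
            fun _ u hu1 hu2 hErr => ?_⟩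
          · have hpre := initSeg_prefix w0.1 (show s.length ≤ n' by omega)
            rwa [hw0G.1] at hpre
          · rw [initSeg_length]; omega
          · rw [initSeg_length] at hu1
            obtain ⟨-, hprop⟩ := hErr
            obtain ⟨y, hyF, hyu, hyle⟩ := (hprop n').2
            have hyw0 : initSeg y.1 n' = initSeg w0.1 n' := hyu.trans hu1
            have hyG : y ∈ G := by
              refine ⟨?_, hyF⟩
              rw [initSeg_eq_of_le (show s.length ≤ n' by omega) hyw0, hw0G.1]
            have := hfail y hyG (initSeg_eq_of_le (show n ≤ n' by omega) hyw0)
            linarith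
      · obtain ⟨x0, hx01, hx02⟩ := hne
        refine ⟨initSeg x0.1 (max s.length k), ?_, ?_,
          ⟨x0, by rw [initSeg_length], hx02⟩, fun h => absurd h hq⟩
        · have hpre := initSeg_prefix x0.1 (le_max_left s.length k)
          rwa [hx01] at hpre
        · rw [initSeg_length]; exact le_max_right _ _
    obtain ⟨en, hen⟩ := exists_surjective_nat (ℚ × ℚ)
    obtain ⟨x0, hx0⟩ := hFe
    have h0 : ∃ x : Branches T, initSeg x.1 ([] : List A).length = [] ∧ x ∈ F := ⟨x0, rfl, hx0⟩
    set P : List A → Prop := fun s => ∃ x : Branches T, initSeg x.1 s.length = s ∧ x ∈ F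
      with hP
    let Φ : ℕ → {l : List A // P l} → {l : List A // P l} := fun k p =>
      ⟨(hstep (en k) p.1 p.2 (k + 1)).choose,
        (hstep (en k) p.1 p.2 (k + 1)).choose_spec.2.2.1⟩
    let seq : ℕ → {l : List A // P l} := fun n => Nat.rec ⟨[], h0⟩ (fun k prev => Φ k prev) n
    have hchain : ∀ k, (seq k).1 <+: (seq (k + 1)).1 := fun k =>
      (hstep (en k) (seq k).1 (seq k).2 (k + 1)).choose_spec.1
    have hlen : ∀ k, k ≤ (seq k).1.length := by
      intro k
      cases k with
      | zero => simp
      | succ k => exact (hstep (en k) (seq k).1 (seq k).2 (k + 1)).choose_spec.2.1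
    have havoid : ∀ k, ((en k).1 : ℝ) < ((en k).2 : ℝ) → ∀ u : Branches T,
        initSeg u.1 (seq (k + 1)).1.length = (seq (k + 1)).1 → u ∈ F → u ∉ E (en k) :=
      fun k => (hstep (en k) (seq k).1 (seq k).2 (k + 1)).choose_spec.2.2.2
    set d : A := Classical.arbitrary A with hd
    have hspec := chainLimit_initSeg d hchain hlen
    set xs : ℕ → A := chainLimit (fun k => (seq k).1) d with hxs
    have hmem : ∀ n, initSeg xs n ∈ T := by
      intro n
      rw [hspec n]
      obtain ⟨y, hy1, -⟩ := (seq n).2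
      rw [← hy1, initSeg_take y.1 (hy1 ▸ hlen n)]
      exact y.2 n
    set X : Branches T := ⟨xs, hmem⟩ with hX
    have hXcyl : ∀ k, initSeg xs (seq k).1.length = (seq k).1 := by
      intro k
      rw [hspec ((seq k).1.length)]
      have hpre : (seq k).1 <+: (seq ((seq k).1.length)).1 := chain_mono hchain (hlen k)
      rw [List.prefix_iff_eq_take] at hpre
      exact hpre.symm
    have hXF : X ∈ F := by
      simp only [hF, hX, Set.mem_setOf_eq]
      intro t ht heq
      obtain ⟨w, hw1, hw2⟩ := (seq t.length).2
      have hlt : t.length ≤ (seq t.length).1.length := hlen t.length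
      have hwt : initSeg w.1 t.length = t := by
        have h2 : initSeg w.1 t.length = (seq t.length).1.take t.length := by
          rw [← hw1, initSeg_take w.1 (hw1 ▸ hlt)]
        rw [h2, ← hspec t.length]
        exact heq
      exact hw2 t ht hwt
    obtain ⟨q, hq, hqE⟩ := hcover X hXF
    obtain ⟨k, hk⟩ := hen q
    have hav := havoid k (by rw [hk]; exact hq) X (hXcyl (k + 1)) hXF
    rw [hk] at hav
    exact hav hqE
  · rw [Set.not_nonempty_iff_eq_empty] at hFe
    exact ⟨glob, hglob_tc, hglob_small, fun x =>
      hglob_cover x (by rw [hFe]; exact Set.notMem_empty x)⟩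

end Decomposition

section BuildU

/-- Clamp a real number to `[-B, B]`. -/
noncomputable def clamp (a B : ℝ) : ℝ := max (-B) (min B a)

lemma abs_clamp_le {B : ℝ} (hB : 0 ≤ B) (a : ℝ) : |clamp a B| ≤ B := by
  rw [abs_le, clamp]
  constructor
  · exact le_max_left _ _
  · exact max_le (by linarith) (min_le_left _ _)

lemma clamp_eq {a B : ℝ} (h : |a| ≤ B) : clamp a B = a := by
  rw [abs_le] at h
  rw [clamp, min_eq_right h.2, max_eq_right h.1]

lemma geom_tail_le (a b : ℕ) : ∑ i ∈ Finset.Ico a b, (1/2 : ℝ)^i ≤ 2 * (1/2)^a := by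
  rcases le_or_gt a b with hab | hab
  · have key : ∀ c, a ≤ c → ∑ i ∈ Finset.Ico a c, (1/2 : ℝ)^i
        ≤ 2 * (1/2)^a - 2 * (1/2)^c := by
      intro c hc
      induction c with
      | zero =>
        have : a = 0 := Nat.le_zero.mp hc
        subst this; simp
      | succ c ih =>
        rcases Nat.lt_or_ge a (c+1) with h | h
        · have hac : a ≤ c := Nat.lt_succ_iff.mp h
          rw [Finset.sum_Ico_succ_top hac]
          have := ih hac
          have hpow : (1/2 : ℝ)^(c+1) = (1/2)^c / 2 := by rw [pow_succ]; ring
          linarith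
        · have : a = c + 1 := le_antisymm hc h
          subst this; simp
    have := key b hab
    have hpos : (0:ℝ) ≤ 2 * (1/2)^b := by positivity
    linarith
  · rw [Finset.Ico_eq_empty (by omega)]
    simp only [Finset.sum_empty]
    positivity

variable [Countable A] [Nonempty A]

theorem exists_U (hT : IsPrunedTree T) (f : Branches T → ℝ) (hnb : ¬ BadPair f) :
    ∃ U : List A → ℝ, ∀ x : Branches T,
      Tendsto (fun t : ℕ => U (initSeg x.1 t)) atTop (𝓝 (f x)) := by
  classical
  have hdec := fun j : ℕ => decomposition f hnb (ε := (1/2 : ℝ)^j) (by positivity)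
  choose K hKtc hKsm hKcov using hdec
  obtain ⟨xbar⟩ := branches_nonempty (T := T) hT
  set pt : ℕ → ℕ → Branches T := fun j i =>
    if h : (K j i).Nonempty then h.choose else xbar with hpt
  set idx : ℕ → List A → ℕ := fun j s =>
    sInf {i | ∃ y : Branches T, initSeg y.1 s.length = s ∧ y ∈ K j i} with hidx
  set u : ℕ → List A → ℝ := fun j s => f (pt j (idx j s)) with hu
  set val : ℕ → Branches T → ℝ := fun j x => f (pt j (sInf {i | x ∈ K j i})) with hval
  have hsettle : ∀ j (x : Branches T), ∃ N : ℕ, ∀ t ≥ N,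
      u j (initSeg x.1 t) = val j x := by
    intro j x
    have hne : {i | x ∈ K j i}.Nonempty := hKcov j x
    have hxi₀ : x ∈ K j (sInf {i | x ∈ K j i}) := Nat.sInf_mem hne
    set i₀ := sInf {i | x ∈ K j i} with hi₀
    set m : ℕ → ℕ := fun i => if h : x ∈ K j i then 0 else (hKtc j i x h).choose with hm
    refine ⟨(Finset.range i₀).sup m, fun t ht => ?_⟩
    have hIdx : idx j (initSeg x.1 t) = i₀ := by
      have hsetne : {i | ∃ y : Branches T,
          initSeg y.1 (initSeg x.1 t).length = initSeg x.1 t ∧ y ∈ K j i}.Nonempty :=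
        ⟨i₀, x, by rw [initSeg_length], hxi₀⟩
      refine le_antisymm (Nat.sInf_le ⟨x, by rw [initSeg_length], hxi₀⟩) ?_
      by_contra hlt
      push_neg at hlt
      obtain ⟨y, hy1, hy2⟩ := Nat.sInf_mem hsetne
      have hxnot : x ∉ K j (idx j (initSeg x.1 t)) := by
        intro hmem
        have : i₀ ≤ idx j (initSeg x.1 t) := Nat.sInf_le hmem
        omega
      have hmspec : ∀ z ∈ K j (idx j (initSeg x.1 t)),
          initSeg z.1 (m (idx j (initSeg x.1 t))) ≠ initSeg x.1 (m (idx j (initSeg x.1 t))) := by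
        have hmeq : m (idx j (initSeg x.1 t)) = (hKtc j _ x hxnot).choose := by
          simp only [hm]; rw [dif_neg hxnot]
        rw [hmeq]
        exact (hKtc j _ x hxnot).choose_spec
      have hmle : m (idx j (initSeg x.1 t)) ≤ t :=
        le_trans (Finset.le_sup (Finset.mem_range.mpr hlt)) ht
      rw [initSeg_length] at hy1
      exact hmspec y hy2 (initSeg_eq_of_le hmle hy1)
    simp only [hu]
    rw [hIdx]
  have hacc : ∀ j (x : Branches T), |val j x - f x| ≤ (1/2 : ℝ)^j := by
    intro j x
    have hne : {i | x ∈ K j i}.Nonempty := hKcov j x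
    have hxi₀ : x ∈ K j (sInf {i | x ∈ K j i}) := Nat.sInf_mem hne
    have hptm : pt j (sInf {i | x ∈ K j i}) ∈ K j (sInf {i | x ∈ K j i}) := by
      simp only [hpt]
      rw [dif_pos ⟨x, hxi₀⟩]
      exact (⟨x, hxi₀⟩ : (K j (sInf {i | x ∈ K j i})).Nonempty).choose_spec
    exact hKsm j _ _ hptm _ hxi₀
  set B : ℕ → ℝ := fun i => (1/2 : ℝ)^i + (1/2 : ℝ)^(i+1) with hB
  have hBpos : ∀ i, (0:ℝ) ≤ B i := by intro i; rw [hB]; positivity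
  set U : List A → ℝ := fun s =>
    u 0 s + ∑ i ∈ Finset.range s.length, clamp (u (i+1) s - u i s) (B i) with hU
  refine ⟨U, fun x => ?_⟩
  choose S hS using fun j => hsettle j x
  have hdiffbd : ∀ j, |val (j+1) x - val j x| ≤ B j := by
    intro j
    calc |val (j+1) x - val j x|
        ≤ |val (j+1) x - f x| + |f x - val j x| := abs_sub_le _ _ _
      _ ≤ (1/2)^(j+1) + (1/2)^j :=
          add_le_add (hacc (j+1) x) (by rw [abs_sub_comm]; exact hacc j x)
      _ = B j := by rw [hB]; ring
  rw [Metric.tendsto_atTop]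
  intro δ hδ
  obtain ⟨J, hJ⟩ := exists_pow_lt_of_lt_one (show (0:ℝ) < δ/8 by linarith)
    (by norm_num : (1/2 : ℝ) < 1)
  refine ⟨max J ((Finset.range (J+1)).sup S), fun t ht => ?_⟩
  have htJ : J ≤ t := le_trans (le_max_left _ _) ht
  have hts : ∀ j ≤ J, u j (initSeg x.1 t) = val j x := by
    intro j hj
    refine hS j t (le_trans ?_ (le_trans (le_max_right J _) ht))
    exact Finset.le_sup (Finset.mem_range.mpr (Nat.lt_succ_of_le hj))
  have hsplit : U (initSeg x.1 t) =
      (u 0 (initSeg x.1 t) + ∑ i ∈ Finset.range J,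
        clamp (u (i+1) (initSeg x.1 t) - u i (initSeg x.1 t)) (B i))
      + ∑ i ∈ Finset.Ico J t,
        clamp (u (i+1) (initSeg x.1 t) - u i (initSeg x.1 t)) (B i) := by
    simp only [hU]
    rw [initSeg_length]
    rw [Finset.range_eq_Ico, ← Finset.sum_Ico_consecutive _ (Nat.zero_le J) htJ,
      ← Finset.range_eq_Ico]
    ring
  have hhead : u 0 (initSeg x.1 t) + ∑ i ∈ Finset.range J,
      clamp (u (i+1) (initSeg x.1 t) - u i (initSeg x.1 t)) (B i) = val J x := by
    rw [hts 0 (Nat.zero_le J)]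
    have hcongr : ∀ i ∈ Finset.range J,
        clamp (u (i+1) (initSeg x.1 t) - u i (initSeg x.1 t)) (B i)
          = val (i+1) x - val i x := by
      intro i hi
      rw [Finset.mem_range] at hi
      rw [hts (i+1) (by omega), hts i (by omega)]
      exact clamp_eq (hdiffbd i)
    rw [Finset.sum_congr rfl hcongr, Finset.sum_range_sub (fun i => val i x)]
    ring
  have htail : |∑ i ∈ Finset.Ico J t,
      clamp (u (i+1) (initSeg x.1 t) - u i (initSeg x.1 t)) (B i)| ≤ 3 * (1/2)^J := by
    have h1 : |∑ i ∈ Finset.Ico J t,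
        clamp (u (i+1) (initSeg x.1 t) - u i (initSeg x.1 t)) (B i)|
        ≤ ∑ i ∈ Finset.Ico J t, B i := by
      refine le_trans (Finset.abs_sum_le_sum_abs _ _) ?_
      exact Finset.sum_le_sum (fun i _ => abs_clamp_le (hBpos i) _)
    have h2 : ∑ i ∈ Finset.Ico J t, B i
        = ∑ i ∈ Finset.Ico J t, (1/2:ℝ)^i + ∑ i ∈ Finset.Ico J t, (1/2:ℝ)^(i+1) := by
      rw [hB, ← Finset.sum_add_distrib]
    have h3 : ∑ i ∈ Finset.Ico J t, (1/2:ℝ)^(i+1)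
        = (1/2) * ∑ i ∈ Finset.Ico J t, (1/2:ℝ)^i := by
      rw [Finset.mul_sum]
      refine Finset.sum_congr rfl (fun i _ => ?_)
      rw [pow_succ]; ring
    have h4 := geom_tail_le J t
    have h5 : (0:ℝ) ≤ ∑ i ∈ Finset.Ico J t, (1/2:ℝ)^i :=
      Finset.sum_nonneg (fun i _ => by positivity)
    calc |∑ i ∈ Finset.Ico J t,
        clamp (u (i+1) (initSeg x.1 t) - u i (initSeg x.1 t)) (B i)|
        ≤ ∑ i ∈ Finset.Ico J t, B i := h1
      _ = ∑ i ∈ Finset.Ico J t, (1/2:ℝ)^i + (1/2) * ∑ i ∈ Finset.Ico J t, (1/2:ℝ)^i := by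
          rw [h2, h3]
      _ ≤ 2 * (1/2)^J + (1/2) * (2 * (1/2)^J) := by nlinarith
      _ = 3 * (1/2)^J := by ring
  rw [Real.dist_eq]
  have hval' := hacc J x
  have hsum : U (initSeg x.1 t) - f x = (val J x - f x) + ∑ i ∈ Finset.Ico J t,
      clamp (u (i+1) (initSeg x.1 t) - u i (initSeg x.1 t)) (B i) := by
    rw [hsplit, hhead]; ring
  calc |U (initSeg x.1 t) - f x|
      ≤ |val J x - f x| + |∑ i ∈ Finset.Ico J t,
        clamp (u (i+1) (initSeg x.1 t) - u i (initSeg x.1 t)) (B i)| := by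
        rw [hsum]; exact abs_add_le _ _
    _ ≤ (1/2)^J + 3 * (1/2)^J := add_le_add hval' htail
    _ = 4 * (1/2)^J := by ring
    _ < δ := by linarith
end BuildU
end GammaAux

/-- For an arbitrary function `f : X → ℝ`, the game `Γ'(f)` is determined. -/
theorem gamma'_determined
    {A : Type*} [Countable A] [Nonempty A] [TopologicalSpace A] [DiscreteTopology A]
    {T : Set (List A)} (hT : IsPrunedTree T) (f : Branches T → ℝ) :
    PlayerIWinsGamma' f ∨ PlayerIIWinsGamma' f := by
  classical
  by_cases hb : GammaAux.BadPair f
  · exact Or.inl (GammaAux.playerI_of_badPair f hb)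
  · obtain ⟨U, hU⟩ := GammaAux.exists_U hT f hb
    exact Or.inr (GammaAux.playerII_of_U f U hU)
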